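/- arXiv:1112.3139 — 3 statements merged into one kernel-verified Lean document; each statement's English description precedes it below -/
import Mathlib

section
/- Addition formula for Kummer series: for all real a, all real b > 0, and all real z, w, the series ∑_{n=0}^∞ ((a)_n/(b)_n) (z^n/n!) · M(a+n, b+n, w) converges and its sum equals M(a, b, z+w). -/
open scoped BigOperators

/-- Pochhammer symbol `(a)ₙ = a(a+1)⋯(a+n−1)`, `(a)₀ = 1`. -/
noncomputable def poch (a : ℝ) (n : ℕ) : ℝ := ∏ k ∈ Finset.range n, (a + k)

/-- Kummer's confluent hypergeometric function `M(a,b,z)`. -/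
noncomputable def kummerM (a b z : ℝ) : ℝ :=
  ∑' k : ℕ, poch a k / poch b k * z ^ k / (Nat.factorial k : ℝ)

/-- Steady-state probability `P_{0,n}` of the binary gene model. -/
noncomputable def P0 (a b ν θ : ℝ) (n : ℕ) : ℝ :=
  (b - a) / (kummerM a b (ν * (1 - θ)) * b) * (ν ^ n / (Nat.factorial n : ℝ)) *
    (poch a n / poch (1 + b) n) * kummerM (a + n) (1 + b + n) (-(ν * θ))

/-- Steady-state probability `P_{1,n}` of the binary gene model. -/
noncomputable def P1 (a b ν θ : ℝ) (n : ℕ) : ℝ :=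
  a / (kummerM a b (ν * (1 - θ)) * b) * (ν ^ n / (Nat.factorial n : ℝ)) *
    (poch (1 + a) n / poch (1 + b) n) * kummerM (1 + a + n) (1 + b + n) (-(ν * θ))


lemma poch_pos {b : ℝ} (hb : 0 < b) (n : ℕ) : 0 < poch b n :=
  Finset.prod_pos fun k _ => by positivity

lemma poch_nonneg {a : ℝ} (ha : 0 ≤ a) (n : ℕ) : 0 ≤ poch a n :=
  Finset.prod_nonneg fun k _ => by positivity

lemma poch_add (a : ℝ) (n m : ℕ) : poch a (n + m) = poch a n * poch (a + n) m := by
  rw [poch, poch, poch, Finset.prod_range_add]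
  congr 1
  refine Finset.prod_congr rfl fun k _ => ?_
  push_cast; ring

lemma abs_poch_le (a : ℝ) (n : ℕ) : |poch a n| ≤ poch |a| n := by
  rw [poch, poch, Finset.abs_prod]
  refine Finset.prod_le_prod (fun _ _ => abs_nonneg _) fun k _ => ?_
  calc |a + (k : ℝ)| ≤ |a| + |(k : ℝ)| := abs_add_le _ _
    _ = |a| + k := by rw [Nat.abs_cast]

lemma poch_le {a : ℝ} (ha : 0 ≤ a) (n : ℕ) : poch a n ≤ (max a 1) ^ n * n.factorial := by
  induction n with
  | zero => simp [poch]
  | succ n ih =>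
    rw [poch, Finset.prod_range_succ, ← poch]
    have h1 : (0:ℝ) ≤ max a 1 := le_trans zero_le_one (le_max_right a 1)
    have h2 : a + n ≤ max a 1 * (n + 1) := by
      nlinarith [le_max_left a 1, le_max_right a 1, Nat.cast_nonneg (α := ℝ) n]
    calc poch a n * (a + n) ≤ ((max a 1) ^ n * n.factorial) * (max a 1 * (n + 1)) := by
          apply mul_le_mul ih h2 (by positivity) (by positivity)
      _ = (max a 1) ^ (n+1) * (n+1).factorial := by
          rw [Nat.factorial_succ]; push_cast; ring

lemma le_poch {b : ℝ} (hb : 0 < b) (n : ℕ) : (min b 1) ^ n * n.factorial ≤ poch b n := by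
  induction n with
  | zero => simp [poch]
  | succ n ih =>
    rw [poch, Finset.prod_range_succ, ← poch]
    have h1 : (0:ℝ) < min b 1 := lt_min hb one_pos
    have h2 : min b 1 * (n + 1) ≤ b + n := by
      nlinarith [min_le_left b 1, min_le_right b 1, Nat.cast_nonneg (α := ℝ) n]
    calc (min b 1) ^ (n+1) * (n+1).factorial
        = ((min b 1) ^ n * n.factorial) * (min b 1 * (n + 1)) := by
          rw [Nat.factorial_succ]; push_cast; ring
      _ ≤ poch b n * (b + n) := by
          apply mul_le_mul ih h2 (by positivity) (le_of_lt (poch_pos hb n))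

lemma kummer_abs_le (a : ℝ) {b : ℝ} (hb : 0 < b) (x : ℝ) (k : ℕ) :
    |poch a k / poch b k * x ^ k / (Nat.factorial k : ℝ)| ≤
      (max |a| 1 * |x| / min b 1) ^ k / (Nat.factorial k : ℝ) := by
  have hm : (0:ℝ) < min b 1 := lt_min hb one_pos
  have hM : (0:ℝ) < max |a| 1 := lt_of_lt_of_le one_pos (le_max_right _ 1)
  have hpb := poch_pos hb k
  have hfac : (0:ℝ) < (Nat.factorial k : ℝ) := by positivity
  have h1 : |poch a k / poch b k * x ^ k / (Nat.factorial k : ℝ)|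
      = |poch a k| / poch b k * |x| ^ k / (Nat.factorial k : ℝ) := by
    rw [abs_div, abs_mul, abs_div, abs_pow, abs_of_pos hpb, abs_of_pos hfac]
  rw [h1]
  have h2 : |poch a k| ≤ (max |a| 1) ^ k * k.factorial :=
    (abs_poch_le a k).trans (poch_le (abs_nonneg a) k)
  have h4 : |poch a k| / poch b k ≤ (max |a| 1 / min b 1) ^ k := by
    have := div_le_div₀ (by positivity) h2 (by positivity) (le_poch hb k)
    calc |poch a k| / poch b k ≤ ((max |a| 1) ^ k * k.factorial) / ((min b 1) ^ k * k.factorial) := this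
      _ = (max |a| 1 / min b 1) ^ k := by
          rw [div_pow, mul_div_mul_right _ _ hfac.ne']
  calc |poch a k| / poch b k * |x| ^ k / (Nat.factorial k : ℝ)
      ≤ (max |a| 1 / min b 1) ^ k * |x| ^ k / (Nat.factorial k : ℝ) := by gcongr
    _ = (max |a| 1 * |x| / min b 1) ^ k / (Nat.factorial k : ℝ) := by
        rw [div_pow, div_pow, mul_pow]; ring

lemma kummer_summable (a : ℝ) {b : ℝ} (hb : 0 < b) (x : ℝ) :
    Summable fun k : ℕ => poch a k / poch b k * x ^ k / (Nat.factorial k : ℝ) := by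
  refine Summable.of_abs (Summable.of_nonneg_of_le (fun k => abs_nonneg _)
    (kummer_abs_le a hb x) (Real.summable_pow_div_factorial _))

lemma antidiag_sum (x y : ℝ) (k : ℕ) :
    ∑ p ∈ Finset.HasAntidiagonal.antidiagonal k,
      x ^ p.1 * y ^ p.2 / ((Nat.factorial p.1 : ℝ) * (Nat.factorial p.2 : ℝ)) =
      (x + y) ^ k / (Nat.factorial k : ℝ) := by
  rw [Finset.Nat.sum_antidiagonal_eq_sum_range_succ_mk, add_pow, Finset.sum_div]
  refine Finset.sum_congr rfl fun i hi => ?_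
  have hik : i ≤ k := Nat.lt_succ_iff.mp (Finset.mem_range.mp hi)
  have h : ((k.choose i : ℝ) * ((i.factorial : ℝ) * ((k - i).factorial : ℝ)))
      = (k.factorial : ℝ) := by
    rw_mod_cast [← Nat.choose_mul_factorial_mul_factorial hik]; push_cast; ring
  rw [← h]
  have h1 : (0:ℝ) < (i.factorial : ℝ) := by positivity
  have h2 : (0:ℝ) < ((k - i).factorial : ℝ) := by positivity
  have h3 : (0:ℝ) < (k.choose i : ℝ) := by
    exact_mod_cast Nat.cast_pos.mpr (Nat.choose_pos hik)
  field_simp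


/-- Addition formula for Kummer series. -/
theorem kummerM_addition_formula (a b z w : ℝ) (hb : 0 < b) :
    Summable (fun n : ℕ =>
      poch a n / poch b n * z ^ n / (Nat.factorial n : ℝ) *
        kummerM (a + n) (b + n) w) ∧
    (∑' n : ℕ, poch a n / poch b n * z ^ n / (Nat.factorial n : ℝ) *
        kummerM (a + n) (b + n) w) = kummerM a b (z + w) := by
  set F : ℕ × ℕ → ℝ := fun p =>
    poch a (p.1 + p.2) / poch b (p.1 + p.2) * (z ^ p.1 * w ^ p.2) /
      ((Nat.factorial p.1 : ℝ) * (Nat.factorial p.2 : ℝ)) with hF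
  have habsF : ∀ p : ℕ × ℕ, |F p| =
      |poch a (p.1 + p.2)| / poch b (p.1 + p.2) * (|z| ^ p.1 * |w| ^ p.2) /
        ((Nat.factorial p.1 : ℝ) * (Nat.factorial p.2 : ℝ)) := by
    intro p
    have h1 : (0:ℝ) < (Nat.factorial p.1 : ℝ) * (Nat.factorial p.2 : ℝ) := by positivity
    rw [hF]
    simp only
    rw [abs_div, abs_mul, abs_div, abs_mul, abs_pow, abs_pow, abs_of_pos (poch_pos hb _),
      abs_of_pos h1]
  -- antidiagonal sums of |F|
  have key : ∀ k : ℕ, ∑ p ∈ Finset.HasAntidiagonal.antidiagonal k, |F p| =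
      |poch a k| / poch b k * ((|z| + |w|) ^ k / (Nat.factorial k : ℝ)) := by
    intro k
    have h : ∀ p ∈ Finset.HasAntidiagonal.antidiagonal k, |F p| =
        |poch a k| / poch b k *
          (|z| ^ p.1 * |w| ^ p.2 / ((Nat.factorial p.1 : ℝ) * (Nat.factorial p.2 : ℝ))) := by
      intro p hp
      have hpk : p.1 + p.2 = k := Finset.HasAntidiagonal.mem_antidiagonal.mp hp
      rw [habsF, hpk]; ring
    rw [Finset.sum_congr rfl h, ← Finset.mul_sum, antidiag_sum]
  -- comparison series
  have hcomp : Summable fun k : ℕ =>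
      |poch a k| / poch b k * ((|z| + |w|) ^ k / (Nat.factorial k : ℝ)) := by
    have base := kummer_summable |a| hb (|z| + |w|)
    simp only [mul_div_assoc] at base
    refine Summable.of_nonneg_of_le
      (fun k => mul_nonneg (div_nonneg (abs_nonneg _) (poch_pos hb k).le) (by positivity))
      (fun k => ?_) base
    exact mul_le_mul_of_nonneg_right
      ((div_le_div_iff_of_pos_right (poch_pos hb k)).mpr (abs_poch_le a k)) (by positivity)
  have habs : Summable fun p : ℕ × ℕ => |F p| := by
    rw [← (Finset.HasAntidiagonal.sigmaAntidiagonalEquivProd).summable_iff]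
    apply (summable_sigma_of_nonneg fun _ => abs_nonneg _).mpr
    constructor
    · intro k
      exact Summable.of_finite
    · apply Summable.congr hcomp
      intro k
      rw [← key k, ← Finset.tsum_subtype]
      rfl
  have hFsum : Summable F := habs.of_abs
  -- inner sum computation
  have hinner : ∀ n : ℕ, ∑' m : ℕ, F (n, m) =
      poch a n / poch b n * z ^ n / (Nat.factorial n : ℝ) * kummerM (a + n) (b + n) w := by
    intro n
    have h : ∀ m : ℕ, F (n, m) =
        (poch a n / poch b n * z ^ n / (Nat.factorial n : ℝ)) *
          (poch (a + n) m / poch (b + n) m * w ^ m / (Nat.factorial m : ℝ)) := by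
      intro m
      rw [hF]
      simp only
      rw [poch_add a n m, poch_add b n m]
      ring
    rw [tsum_congr h, tsum_mul_left, kummerM]
  have hA : (∑' p : ℕ × ℕ, F p) =
      ∑' n : ℕ, poch a n / poch b n * z ^ n / (Nat.factorial n : ℝ) *
        kummerM (a + n) (b + n) w := by
    rw [Summable.tsum_prod hFsum]
    exact tsum_congr hinner
  have hB : (∑' p : ℕ × ℕ, F p) = kummerM a b (z + w) := by
    rw [← (Finset.HasAntidiagonal.sigmaAntidiagonalEquivProd).tsum_eq F]
    have hG : Summable fun x : (n : ℕ) × {p // p ∈ Finset.HasAntidiagonal.antidiagonal n} =>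
        F (Finset.HasAntidiagonal.sigmaAntidiagonalEquivProd x) :=
      (Finset.HasAntidiagonal.sigmaAntidiagonalEquivProd).summable_iff.mpr hFsum
    rw [Summable.tsum_sigma hG]
    rw [kummerM]
    refine tsum_congr fun k => ?_
    have hsub : (∑' c : Finset.HasAntidiagonal.antidiagonal k,
        F (Finset.HasAntidiagonal.sigmaAntidiagonalEquivProd ⟨k, c⟩)) =
        ∑ p ∈ Finset.HasAntidiagonal.antidiagonal k, F p := by
      rw [← Finset.tsum_subtype]
      rfl
    rw [hsub]
    have h : ∀ p ∈ Finset.HasAntidiagonal.antidiagonal k, F p =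
        poch a k / poch b k *
          (z ^ p.1 * w ^ p.2 / ((Nat.factorial p.1 : ℝ) * (Nat.factorial p.2 : ℝ))) := by
      intro p hp
      have hpk : p.1 + p.2 = k := Finset.HasAntidiagonal.mem_antidiagonal.mp hp
      rw [hF]; simp only; rw [hpk]; ring
    rw [Finset.sum_congr rfl h, ← Finset.mul_sum, antidiag_sum]
    ring
  refine ⟨Summable.congr hFsum.prod hinner, hA.symm.trans hB⟩
end

section
/- Fano factor for the externally regulated gene: for all real a, b with 0 < a < b and all real ν > 0, in the case θ = 1 the Fano factor of the binary model satisfies σ²/⟨n⟩ = 1 + (ν/b)·(1 − a/b)/(1 + 1/b), where ⟨n⟩ = ∑_{n} n·P_n and σ² = ∑_{n} n²·P_n − ⟨n⟩² with P_n = P_{0,n} + P_{1,n}. -/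
open scoped BigOperators

namespace FanoAux

lemma poch_pos {a : ℝ} (ha : 0 < a) (n : ℕ) : 0 < poch a n :=
  Finset.prod_pos fun k _ => by positivity

lemma poch_le {a d : ℝ} (ha : 0 < a) (had : a ≤ d) (n : ℕ) : poch a n ≤ poch d n :=
  Finset.prod_le_prod (fun k _ => by positivity) (fun k _ => by
    have : (0:ℝ) ≤ (k:ℝ) := Nat.cast_nonneg k
    linarith)

lemma poch_add (c : ℝ) (n k : ℕ) : poch c (n + k) = poch c n * poch (c + n) k := by
  unfold poch
  rw [Finset.prod_range_add]
  congr 1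
  refine Finset.prod_congr rfl fun j _ => ?_
  push_cast; ring

lemma poch_one (c : ℝ) : poch c 1 = c := by simp [poch]

lemma poch_two (c : ℝ) : poch c 2 = c * (c + 1) := by
  simp [poch, Finset.prod_range_succ]

lemma kummer_summable {c d : ℝ} (hc : 0 < c) (hcd : c ≤ d) (z : ℝ) :
    Summable (fun k : ℕ => poch c k / poch d k * z ^ k / (Nat.factorial k : ℝ)) := by
  have hd : 0 < d := lt_of_lt_of_le hc hcd
  refine Summable.of_norm_bounded (g := fun k => |z| ^ k / (Nat.factorial k : ℝ))
    (Real.summable_pow_div_factorial |z|) fun k => ?_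
  have h1 : 0 < poch c k := poch_pos hc k
  have h2 : 0 < poch d k := poch_pos hd k
  have hr : poch c k / poch d k ≤ 1 := (div_le_one h2).2 (poch_le hc hcd k)
  have hfac : (0:ℝ) < (Nat.factorial k : ℝ) := by positivity
  rw [Real.norm_eq_abs, abs_div, abs_mul, abs_div, abs_pow, Nat.abs_cast,
    abs_of_pos h1, abs_of_pos h2]
  calc poch c k / poch d k * |z| ^ k / (Nat.factorial k : ℝ)
      ≤ 1 * |z| ^ k / (Nat.factorial k : ℝ) := by gcongr
    _ = |z| ^ k / (Nat.factorial k : ℝ) := by rw [one_mul]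

lemma kummer_hasSum {c d : ℝ} (hc : 0 < c) (hcd : c ≤ d) (z : ℝ) :
    HasSum (fun k : ℕ => poch c k / poch d k * z ^ k / (Nat.factorial k : ℝ))
      (kummerM c d z) := by
  unfold kummerM
  exact (kummer_summable hc hcd z).hasSum

/-- Basic alternating binomial sum. -/
lemma R0 (x : ℝ) (m : ℕ) :
    ∑ i ∈ Finset.range (m + 1),
      x ^ i * (-x) ^ (m - i) / ((Nat.factorial i : ℝ) * (Nat.factorial (m - i) : ℝ))
      = if m = 0 then 1 else 0 := by
  have key : ∀ i ∈ Finset.range (m + 1),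
      x ^ i * (-x) ^ (m - i) / ((Nat.factorial i : ℝ) * (Nat.factorial (m - i) : ℝ))
        = x ^ i * (-x) ^ (m - i) * (m.choose i : ℝ) / (Nat.factorial m : ℝ) := by
    intro i hi
    have hi' : i ≤ m := Nat.lt_succ_iff.mp (Finset.mem_range.mp hi)
    have hfact : (m.choose i : ℝ) * (Nat.factorial i : ℝ) * (Nat.factorial (m - i) : ℝ)
        = (Nat.factorial m : ℝ) := by
      exact_mod_cast congrArg (Nat.cast : ℕ → ℝ) (Nat.choose_mul_factorial_mul_factorial hi')
    have h1 : (Nat.factorial i : ℝ) ≠ 0 := by positivity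
    have h2 : (Nat.factorial (m - i) : ℝ) ≠ 0 := by positivity
    have h3 : (Nat.factorial m : ℝ) ≠ 0 := by positivity
    field_simp
    linear_combination (- x ^ i * (-x) ^ (m - i)) * hfact
  rw [Finset.sum_congr rfl key, ← Finset.sum_div, ← add_pow]
  have : x + -x = 0 := by ring
  rw [this, zero_pow_eq]
  rcases m with _ | m <;> simp

lemma R1 (x : ℝ) (m : ℕ) :
    ∑ i ∈ Finset.range (m + 1), (i : ℝ) *
      (x ^ i * (-x) ^ (m - i) / ((Nat.factorial i : ℝ) * (Nat.factorial (m - i) : ℝ)))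
      = if m = 1 then x else 0 := by
  cases m with
  | zero => simp
  | succ M =>
    rw [Finset.sum_range_succ']
    have hterm : ∀ i : ℕ, ((i + 1 : ℕ) : ℝ) *
        (x ^ (i+1) * (-x) ^ (M + 1 - (i+1)) /
          ((Nat.factorial (i+1) : ℝ) * (Nat.factorial (M + 1 - (i+1)) : ℝ)))
        = x * (x ^ i * (-x) ^ (M - i) /
          ((Nat.factorial i : ℝ) * (Nat.factorial (M - i) : ℝ))) := by
      intro i
      have hs : M + 1 - (i+1) = M - i := by omega
      rw [hs, Nat.factorial_succ]
      have h1 : (Nat.factorial i : ℝ) ≠ 0 := by positivity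
      have h2 : (Nat.factorial (M - i) : ℝ) ≠ 0 := by positivity
      have h3 : ((i:ℝ) + 1) ≠ 0 := by positivity
      push_cast
      field_simp
      ring
    rw [Finset.sum_congr rfl (fun i _ => hterm i), ← Finset.mul_sum, R0]
    rcases M with _ | M <;> simp

lemma R2 (x : ℝ) (m : ℕ) :
    ∑ i ∈ Finset.range (m + 1), (i : ℝ) ^ 2 *
      (x ^ i * (-x) ^ (m - i) / ((Nat.factorial i : ℝ) * (Nat.factorial (m - i) : ℝ)))
      = if m = 1 then x else if m = 2 then x ^ 2 else 0 := by
  cases m with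
  | zero => simp
  | succ M =>
    rw [Finset.sum_range_succ']
    have hterm : ∀ i : ℕ, ((i + 1 : ℕ) : ℝ) ^ 2 *
        (x ^ (i+1) * (-x) ^ (M + 1 - (i+1)) /
          ((Nat.factorial (i+1) : ℝ) * (Nat.factorial (M + 1 - (i+1)) : ℝ)))
        = x * ((i : ℝ) * (x ^ i * (-x) ^ (M - i) /
            ((Nat.factorial i : ℝ) * (Nat.factorial (M - i) : ℝ)))
          + x ^ i * (-x) ^ (M - i) /
            ((Nat.factorial i : ℝ) * (Nat.factorial (M - i) : ℝ))) := by
      intro i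
      have hs : M + 1 - (i+1) = M - i := by omega
      rw [hs, Nat.factorial_succ]
      have h1 : (Nat.factorial i : ℝ) ≠ 0 := by positivity
      have h2 : (Nat.factorial (M - i) : ℝ) ≠ 0 := by positivity
      have h3 : ((i:ℝ) + 1) ≠ 0 := by positivity
      push_cast
      field_simp
      ring
    rw [Finset.sum_congr rfl (fun i _ => hterm i), ← Finset.mul_sum, Finset.sum_add_distrib,
      R0, R1]
    rcases M with _ | _ | M <;> simp <;> ring

lemma V1 (ν : ℝ) (m : ℕ) :
    ∑ p ∈ Finset.HasAntidiagonal.antidiagonal m, (p.1 : ℝ) *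
      (ν ^ p.1 * (-ν) ^ p.2 / ((Nat.factorial p.1 : ℝ) * (Nat.factorial p.2 : ℝ)))
      = if m = 1 then ν else 0 := by
  rw [Finset.Nat.sum_antidiagonal_eq_sum_range_succ_mk]
  exact R1 ν m

lemma V2 (ν : ℝ) (m : ℕ) :
    ∑ p ∈ Finset.HasAntidiagonal.antidiagonal m, (p.1 : ℝ) ^ 2 *
      (ν ^ p.1 * (-ν) ^ p.2 / ((Nat.factorial p.1 : ℝ) * (Nat.factorial p.2 : ℝ)))
      = if m = 1 then ν else if m = 2 then ν ^ 2 else 0 := by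
  rw [Finset.Nat.sum_antidiagonal_eq_sum_range_succ_mk]
  exact R2 ν m

set_option maxHeartbeats 1000000 in
/-- The master summation lemma: a weighted sum over `n` of Kummer tails equals the
diagonal-resummed series. -/
lemma master {c d ν : ℝ} (hc : 0 < c) (hcd : c ≤ d) (w : ℕ → ℝ)
    (hw0 : ∀ n, 0 ≤ w n) (hw : ∀ n, w n ≤ 4 ^ n) {S : ℝ}
    (hS : HasSum (fun m : ℕ => poch c m / poch d m *
      ∑ p ∈ Finset.HasAntidiagonal.antidiagonal m, w p.1 *
        (ν ^ p.1 * (-ν) ^ p.2 / ((Nat.factorial p.1 : ℝ) * (Nat.factorial p.2 : ℝ)))) S) :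
    HasSum (fun n : ℕ => w n * (ν ^ n / (Nat.factorial n : ℝ)) * (poch c n / poch d n) *
      kummerM (c + n) (d + n) (-ν)) S := by
  have hd : (0:ℝ) < d := lt_of_lt_of_le hc hcd
  set F : ℕ × ℕ → ℝ := fun p => w p.1 * (poch c (p.1 + p.2) / poch d (p.1 + p.2)) *
    (ν ^ p.1 * (-ν) ^ p.2 / ((Nat.factorial p.1 : ℝ) * (Nat.factorial p.2 : ℝ))) with hF
  have hFsum : Summable F := by
    refine Summable.of_norm_bounded
      (g := fun p : ℕ × ℕ => (4 * |ν|) ^ p.1 / (Nat.factorial p.1 : ℝ) *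
        ((|ν|) ^ p.2 / (Nat.factorial p.2 : ℝ))) ?_ ?_
    · exact (Real.summable_pow_div_factorial _).mul_of_nonneg
        (Real.summable_pow_div_factorial _) (fun n => by positivity) (fun n => by positivity)
    · rintro ⟨n, k⟩
      have h1 : 0 < poch c (n + k) := poch_pos hc _
      have h2 : 0 < poch d (n + k) := poch_pos hd _
      have hr0 : 0 ≤ poch c (n + k) / poch d (n + k) := le_of_lt (div_pos h1 h2)
      have hr1 : poch c (n + k) / poch d (n + k) ≤ 1 := (div_le_one h2).2 (poch_le hc hcd _)
      have hfac : (0:ℝ) < (Nat.factorial n : ℝ) * (Nat.factorial k : ℝ) := by positivity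
      have hnorm : ‖F (n, k)‖ = w n * (poch c (n + k) / poch d (n + k)) *
          (|ν| ^ n * |ν| ^ k / ((Nat.factorial n : ℝ) * (Nat.factorial k : ℝ))) := by
        rw [Real.norm_eq_abs, hF]
        dsimp only
        rw [abs_mul, abs_mul, abs_of_nonneg (hw0 n), abs_of_nonneg hr0, abs_div, abs_mul,
          abs_pow, abs_pow, abs_neg, abs_of_pos hfac]
      rw [hnorm]
      calc w n * (poch c (n + k) / poch d (n + k)) *
            (|ν| ^ n * |ν| ^ k / ((Nat.factorial n : ℝ) * (Nat.factorial k : ℝ)))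
          ≤ 4 ^ n * 1 *
            (|ν| ^ n * |ν| ^ k / ((Nat.factorial n : ℝ) * (Nat.factorial k : ℝ))) := by
            have hwn := hw n
            gcongr
        _ = (4 * |ν|) ^ n / (Nat.factorial n : ℝ) *
            ((|ν|) ^ k / (Nat.factorial k : ℝ)) := by
            rw [mul_pow]
            field_simp
  have hinner : ∀ m : ℕ, ∑ p ∈ Finset.HasAntidiagonal.antidiagonal m, F p
      = poch c m / poch d m * ∑ p ∈ Finset.HasAntidiagonal.antidiagonal m, w p.1 *
        (ν ^ p.1 * (-ν) ^ p.2 / ((Nat.factorial p.1 : ℝ) * (Nat.factorial p.2 : ℝ))) := by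
    intro m
    rw [Finset.mul_sum]
    refine Finset.sum_congr rfl fun p hp => ?_
    rw [Finset.HasAntidiagonal.mem_antidiagonal] at hp
    rw [hF]
    dsimp only
    rw [hp]
    ring
  set T := ∑' p, F p with hT
  have hsig : HasSum (F ∘ Finset.HasAntidiagonal.sigmaAntidiagonalEquivProd) T :=
    (Equiv.hasSum_iff _).2 hFsum.hasSum
  have h2 : HasSum (fun m : ℕ => ∑ p ∈ Finset.HasAntidiagonal.antidiagonal m, F p) T := by
    refine hsig.sigma fun m => ?_
    have h := hasSum_fintype (fun p : (Finset.HasAntidiagonal.antidiagonal m : Finset (ℕ × ℕ)) => F ↑p)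
    rw [Finset.sum_coe_sort] at h
    exact h
  have h2' : HasSum (fun m : ℕ => poch c m / poch d m *
      ∑ p ∈ Finset.HasAntidiagonal.antidiagonal m, w p.1 *
        (ν ^ p.1 * (-ν) ^ p.2 / ((Nat.factorial p.1 : ℝ) * (Nat.factorial p.2 : ℝ)))) T := by
    rwa [funext hinner] at h2
  have hTS : T = S := h2'.unique hS
  have hfib : ∀ n : ℕ, HasSum (fun k => F (n, k))
      (w n * (ν ^ n / (Nat.factorial n : ℝ)) * (poch c n / poch d n) *
        kummerM (c + n) (d + n) (-ν)) := by
    intro n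
    have hcn : (0:ℝ) < c + n := by
      have : (0:ℝ) ≤ (n:ℝ) := Nat.cast_nonneg n
      linarith
    have hcdn : c + (n:ℝ) ≤ d + n := by linarith
    have hk := (kummer_hasSum hcn hcdn (-ν)).mul_left
      (w n * (ν ^ n / (Nat.factorial n : ℝ)) * (poch c n / poch d n))
    have heq : (fun k : ℕ => w n * (ν ^ n / (Nat.factorial n : ℝ)) * (poch c n / poch d n) *
        (poch (c + n) k / poch (d + n) k * (-ν) ^ k / (Nat.factorial k : ℝ)))
        = fun k => F (n, k) := by
      funext k
      rw [hF]
      dsimp only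
      rw [poch_add c n k, poch_add d n k]
      have h1 : poch d n ≠ 0 := ne_of_gt (poch_pos hd n)
      have h2 : poch (d + n) k ≠ 0 := ne_of_gt (poch_pos (by linarith) k)
      have h3 : (Nat.factorial n : ℝ) ≠ 0 := by positivity
      have h4 : (Nat.factorial k : ℝ) ≠ 0 := by positivity
      field_simp
    rw [← heq]
    exact hk
  exact hTS ▸ hFsum.hasSum.prod_fiberwise hfib

lemma nat_le_four_pow (n : ℕ) : (n : ℝ) ≤ 4 ^ n := by
  have h2 : (n : ℝ) ≤ 2 ^ n := by
    exact_mod_cast le_of_lt (Nat.lt_two_pow_self (n := n))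
  have : (2:ℝ) ^ n ≤ 4 ^ n := by
    apply pow_le_pow_left₀ (by norm_num) (by norm_num)
  linarith

lemma nat_sq_le_four_pow (n : ℕ) : (n : ℝ) ^ 2 ≤ 4 ^ n := by
  have h2 : (n : ℝ) ≤ 2 ^ n := by
    exact_mod_cast le_of_lt (Nat.lt_two_pow_self (n := n))
  have hn : (0:ℝ) ≤ (n:ℝ) := Nat.cast_nonneg n
  have : (n : ℝ) ^ 2 ≤ (2 ^ n : ℝ) ^ 2 := by
    apply pow_le_pow_left₀ hn h2
  calc (n : ℝ) ^ 2 ≤ ((2:ℝ) ^ n) ^ 2 := this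
    _ = 4 ^ n := by rw [← pow_mul, mul_comm, pow_mul]; norm_num
    _ = 4 ^ n := rfl

lemma moment1 (c d ν : ℝ) (hc : 0 < c) (hcd : c ≤ d) :
    HasSum (fun n : ℕ => (n : ℝ) * (ν ^ n / (Nat.factorial n : ℝ)) * (poch c n / poch d n) *
      kummerM (c + n) (d + n) (-ν)) (ν * c / d) := by
  refine master hc hcd (fun n => (n : ℝ)) (fun n => Nat.cast_nonneg n) nat_le_four_pow ?_
  have hfe : (fun m : ℕ => poch c m / poch d m *
      ∑ p ∈ Finset.HasAntidiagonal.antidiagonal m, (p.1 : ℝ) *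
        (ν ^ p.1 * (-ν) ^ p.2 / ((Nat.factorial p.1 : ℝ) * (Nat.factorial p.2 : ℝ))))
      = fun m => if m = 1 then ν * c / d else 0 := by
    funext m
    rw [V1]
    split_ifs with h
    · subst h; rw [poch_one, poch_one]; ring
    · rw [mul_zero]
  rw [hfe]
  exact hasSum_ite_eq 1 _

lemma moment2 (c d ν : ℝ) (hc : 0 < c) (hcd : c ≤ d) :
    HasSum (fun n : ℕ => (n : ℝ) ^ 2 * (ν ^ n / (Nat.factorial n : ℝ)) * (poch c n / poch d n) *
      kummerM (c + n) (d + n) (-ν)) (ν * c / d + ν ^ 2 * (c * (c + 1)) / (d * (d + 1))) := by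
  refine master hc hcd (fun n => (n : ℝ) ^ 2) (fun n => by positivity) nat_sq_le_four_pow ?_
  have hfe : (fun m : ℕ => poch c m / poch d m *
      ∑ p ∈ Finset.HasAntidiagonal.antidiagonal m, (p.1 : ℝ) ^ 2 *
        (ν ^ p.1 * (-ν) ^ p.2 / ((Nat.factorial p.1 : ℝ) * (Nat.factorial p.2 : ℝ))))
      = fun m => (if m = 1 then ν * c / d else 0)
        + (if m = 2 then ν ^ 2 * (c * (c + 1)) / (d * (d + 1)) else 0) := by
    funext m
    rw [V2]
    by_cases h1 : m = 1
    · subst h1; simp [poch_one]; ring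
    · by_cases h2 : m = 2
      · subst h2; simp [poch_two]; ring
      · simp [h1, h2]
  rw [hfe]
  exact (hasSum_ite_eq 1 _).add (hasSum_ite_eq 2 _)

end FanoAux

open FanoAux in
/-- Fano factor for the externally regulated gene. -/
theorem fano_factor_external (a b ν : ℝ) (ha : 0 < a) (hab : a < b)
    (hν : 0 < ν) :
    ((∑' n : ℕ, (n : ℝ) ^ 2 * (P0 a b ν 1 n + P1 a b ν 1 n)) -
        (∑' n : ℕ, (n : ℝ) * (P0 a b ν 1 n + P1 a b ν 1 n)) ^ 2) /
      (∑' n : ℕ, (n : ℝ) * (P0 a b ν 1 n + P1 a b ν 1 n)) =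
    1 + (ν / b) * ((1 - a / b) / (1 + 1 / b)) := by
  have hb : 0 < b := ha.trans hab
  have hb1 : (0:ℝ) < 1 + b := by linarith
  have h1a : (0:ℝ) < 1 + a := by linarith
  have hle1 : a ≤ 1 + b := by linarith
  have hle2 : (1:ℝ) + a ≤ 1 + b := by linarith
  have hC : kummerM a b (ν * (1 - 1)) = 1 := by
    have h0 : ν * (1 - 1) = 0 := by ring
    rw [h0]
    unfold kummerM
    rw [tsum_eq_single 0 ?_]
    · simp [poch]
    · intro k hk
      rw [zero_pow hk]
      simp
  have key1 : (fun n : ℕ => (n : ℝ) * (P0 a b ν 1 n + P1 a b ν 1 n))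
      = fun n : ℕ => (b - a) / b *
          ((n : ℝ) * (ν ^ n / (Nat.factorial n : ℝ)) * (poch a n / poch (1 + b) n) *
            kummerM (a + n) (1 + b + n) (-ν))
        + a / b *
          ((n : ℝ) * (ν ^ n / (Nat.factorial n : ℝ)) * (poch (1 + a) n / poch (1 + b) n) *
            kummerM (1 + a + n) (1 + b + n) (-ν)) := by
    funext n
    unfold P0 P1
    rw [hC]
    simp only [mul_one, one_mul]
    ring
  have key2 : (fun n : ℕ => (n : ℝ) ^ 2 * (P0 a b ν 1 n + P1 a b ν 1 n))
      = fun n : ℕ => (b - a) / b *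
          ((n : ℝ) ^ 2 * (ν ^ n / (Nat.factorial n : ℝ)) * (poch a n / poch (1 + b) n) *
            kummerM (a + n) (1 + b + n) (-ν))
        + a / b *
          ((n : ℝ) ^ 2 * (ν ^ n / (Nat.factorial n : ℝ)) * (poch (1 + a) n / poch (1 + b) n) *
            kummerM (1 + a + n) (1 + b + n) (-ν)) := by
    funext n
    unfold P0 P1
    rw [hC]
    simp only [mul_one, one_mul]
    ring
  have hm1 : HasSum (fun n : ℕ => (n : ℝ) * (P0 a b ν 1 n + P1 a b ν 1 n))
      ((b - a) / b * (ν * a / (1 + b)) + a / b * (ν * (1 + a) / (1 + b))) := by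
    rw [key1]
    exact ((moment1 a (1 + b) ν ha hle1).mul_left ((b - a) / b)).add
      ((moment1 (1 + a) (1 + b) ν h1a hle2).mul_left (a / b))
  have hm2 : HasSum (fun n : ℕ => (n : ℝ) ^ 2 * (P0 a b ν 1 n + P1 a b ν 1 n))
      ((b - a) / b * (ν * a / (1 + b) + ν ^ 2 * (a * (a + 1)) / ((1 + b) * ((1 + b) + 1)))
        + a / b * (ν * (1 + a) / (1 + b)
          + ν ^ 2 * ((1 + a) * ((1 + a) + 1)) / ((1 + b) * ((1 + b) + 1)))) := by
    rw [key2]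
    exact ((moment2 a (1 + b) ν ha hle1).mul_left ((b - a) / b)).add
      ((moment2 (1 + a) (1 + b) ν h1a hle2).mul_left (a / b))
  rw [hm1.tsum_eq, hm2.tsum_eq]
  have hM1 : (b - a) / b * (ν * a / (1 + b)) + a / b * (ν * (1 + a) / (1 + b)) = ν * a / b := by
    field_simp
    ring
  have hM2 : (b - a) / b * (ν * a / (1 + b) + ν ^ 2 * (a * (a + 1)) / ((1 + b) * ((1 + b) + 1)))
        + a / b * (ν * (1 + a) / (1 + b)
          + ν ^ 2 * ((1 + a) * ((1 + a) + 1)) / ((1 + b) * ((1 + b) + 1)))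
      = ν * a / b + ν ^ 2 * (a * (a + 1)) / (b * (b + 1)) := by
    have h2b : (0:ℝ) < 2 + b := by linarith
    field_simp
    ring
  rw [hM1, hM2]
  have hM1ne : ν * a / b ≠ 0 := by positivity
  field_simp
  ring
end

section
/- Poissonian limit under fast switching: fix reals a > 0, ν > 0 and θ with 0 < θ ≤ 1. Regarding the Fano factor F(b) = 1 + ν·((a+1)/(b+1))·M(a+2, b+2, ν(1−θ))/M(a+1, b+1, ν(1−θ)) − ν·(a/b)·M(a+1, b+1, ν(1−θ))/M(a, b, ν(1−θ)) as a function of b, one has F(b) → 1 as b → +∞. -/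
open scoped BigOperators

lemma poch_pos_s15 {x : ℝ} (hx : 0 < x) (n : ℕ) : 0 < poch x n :=
  Finset.prod_pos fun k _ => by positivity

lemma poch_le_s15 {x y : ℝ} (hx : 0 < x) (hxy : x ≤ y) (n : ℕ) : poch x n ≤ poch y n :=
  Finset.prod_le_prod (fun k _ => by positivity) (fun k _ => by linarith)

lemma poch_succ (x : ℝ) (k : ℕ) : poch x (k + 1) = poch (x + 1) k * x := by
  unfold poch
  rw [Finset.prod_range_succ']
  congr 1
  · exact Finset.prod_congr rfl fun j _ => by push_cast; ring
  · simp

lemma kummer_bounds {a b z : ℝ} (ha : 0 < a) (hab : a ≤ b) (hz : 0 ≤ z) :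
    1 ≤ kummerM a b z ∧ kummerM a b z ≤ 1 + a / b * (∑' k : ℕ, z ^ k / (Nat.factorial k : ℝ)) := by
  have hb : 0 < b := lt_of_lt_of_le ha hab
  set f : ℕ → ℝ := fun k => poch a k / poch b k * z ^ k / (Nat.factorial k : ℝ) with hf
  have hf0 : f 0 = 1 := by simp [hf, poch]
  have hfnn : ∀ k, 0 ≤ f k := fun k => by
    have := poch_pos_s15 ha k; have := poch_pos_s15 hb k; positivity
  have hratio_le_one : ∀ k, poch a k / poch b k ≤ 1 := fun k => by
    rw [div_le_one (poch_pos_s15 hb k)]; exact poch_le_s15 ha hab k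
  have hfle : ∀ k, f k ≤ z ^ k / (Nat.factorial k : ℝ) := fun k => by
    have h1 : (0:ℝ) ≤ z ^ k / (Nat.factorial k : ℝ) := by positivity
    calc f k = poch a k / poch b k * (z ^ k / (Nat.factorial k : ℝ)) := by ring
    _ ≤ 1 * (z ^ k / (Nat.factorial k : ℝ)) :=
        mul_le_mul_of_nonneg_right (hratio_le_one k) h1
    _ = _ := one_mul _
  have hg : Summable (fun k : ℕ => z ^ k / (Nat.factorial k : ℝ)) :=
    Real.summable_pow_div_factorial z
  have hsum : Summable f := Summable.of_nonneg_of_le hfnn hfle hg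
  have hkey : kummerM a b z = 1 + ∑' k : ℕ, f (k + 1) := by
    rw [kummerM, ← hf0]; exact Summable.tsum_eq_zero_add hsum
  have hsum' : Summable fun k => f (k + 1) := hsum.comp_injective Nat.succ_injective
  have hg' : Summable fun k : ℕ => z ^ (k+1) / (Nat.factorial (k+1) : ℝ) :=
    hg.comp_injective Nat.succ_injective
  constructor
  · rw [hkey]
    have : 0 ≤ ∑' k : ℕ, f (k + 1) := tsum_nonneg fun k => hfnn _
    linarith
  · rw [hkey]
    have hterm : ∀ k : ℕ, f (k + 1) ≤ a / b * (z ^ (k+1) / (Nat.factorial (k+1) : ℝ)) := by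
      intro k
      have hr : poch a (k+1) / poch b (k+1) ≤ a / b := by
        rw [poch_succ, poch_succ]
        have h1 : 0 < a + 1 := by linarith
        have h2 : 0 < poch (b+1) k := poch_pos_s15 (by linarith) k
        have h3 : poch (a+1) k ≤ poch (b+1) k := poch_le_s15 h1 (by linarith) k
        rw [div_le_div_iff₀ (by positivity) hb]
        have : poch (a+1) k * a * b ≤ poch (b+1) k * a * b := by
          apply mul_le_mul_of_nonneg_right _ hb.le
          exact mul_le_mul_of_nonneg_right h3 ha.le
        nlinarith [poch_pos_s15 h1 k]
      have h1 : (0:ℝ) ≤ z ^ (k+1) / (Nat.factorial (k+1) : ℝ) := by positivity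
      calc f (k+1) = poch a (k+1) / poch b (k+1) * (z ^ (k+1) / (Nat.factorial (k+1) : ℝ)) := by
            ring
      _ ≤ a / b * (z ^ (k+1) / (Nat.factorial (k+1) : ℝ)) :=
            mul_le_mul_of_nonneg_right hr h1
    have htail : ∑' k : ℕ, f (k + 1) ≤
        a / b * ∑' k : ℕ, z ^ (k+1) / (Nat.factorial (k+1) : ℝ) := by
      rw [← tsum_mul_left]
      exact Summable.tsum_le_tsum hterm hsum' (hg'.mul_left _)
    have hshift : ∑' k : ℕ, z ^ (k+1) / (Nat.factorial (k+1) : ℝ) ≤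
        ∑' k : ℕ, z ^ k / (Nat.factorial k : ℝ) := by
      have := Summable.tsum_eq_zero_add hg
      simp only [pow_zero, Nat.factorial_zero, Nat.cast_one, div_one] at this
      linarith
    have hab' : 0 ≤ a / b := by positivity
    nlinarith [mul_le_mul_of_nonneg_left hshift hab']

lemma kummer_tendsto {a z : ℝ} (ha : 0 < a) (hz : 0 ≤ z) :
    Filter.Tendsto (fun b : ℝ => kummerM a b z) Filter.atTop (nhds 1) := by
  set E : ℝ := ∑' k : ℕ, z ^ k / (Nat.factorial k : ℝ)
  have hupper : Filter.Tendsto (fun b : ℝ => 1 + a / b * E) Filter.atTop (nhds 1) := by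
    have h0 : Filter.Tendsto (fun b : ℝ => a / b) Filter.atTop (nhds 0) :=
      Filter.Tendsto.div_atTop tendsto_const_nhds Filter.tendsto_id
    have := (h0.mul_const E).const_add 1
    simpa using this
  refine tendsto_of_tendsto_of_tendsto_of_le_of_le' tendsto_const_nhds hupper ?_ ?_
  · filter_upwards [Filter.eventually_ge_atTop a] with b hb
    exact (kummer_bounds ha hb hz).1
  · filter_upwards [Filter.eventually_ge_atTop a] with b hb
    exact (kummer_bounds ha hb hz).2

/-- Poissonian limit under fast switching: the Fano factor tends to 1 as b → ∞. -/
theorem fano_factor_tendsto_one (a ν θ : ℝ) (ha : 0 < a) (hν : 0 < ν)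
    (hθ0 : 0 < θ) (hθ1 : θ ≤ 1) :
    Filter.Tendsto (fun b : ℝ =>
        1 + ν * ((a + 1) / (b + 1)) *
              (kummerM (a + 2) (b + 2) (ν * (1 - θ)) /
                kummerM (a + 1) (b + 1) (ν * (1 - θ)))
          - ν * (a / b) *
              (kummerM (a + 1) (b + 1) (ν * (1 - θ)) /
                kummerM a b (ν * (1 - θ))))
      Filter.atTop (nhds 1) := by
  set z : ℝ := ν * (1 - θ) with hzdef
  have hz : 0 ≤ z := by
    apply mul_nonneg hν.le; linarith
  have hshift : ∀ c : ℝ, Filter.Tendsto (fun b : ℝ => b + c) Filter.atTop Filter.atTop :=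
    fun c => Filter.tendsto_atTop_add_const_right _ c Filter.tendsto_id
  have hM : ∀ c : ℝ, 0 < a + c →
      Filter.Tendsto (fun b : ℝ => kummerM (a + c) (b + c) z) Filter.atTop (nhds 1) :=
    fun c hc => (kummer_tendsto hc hz).comp (hshift c)
  have hM0 : Filter.Tendsto (fun b : ℝ => kummerM a b z) Filter.atTop (nhds 1) :=
    kummer_tendsto ha hz
  have hM1 : Filter.Tendsto (fun b : ℝ => kummerM (a+1) (b+1) z) Filter.atTop (nhds 1) :=
    hM 1 (by linarith)
  have hM2 : Filter.Tendsto (fun b : ℝ => kummerM (a+2) (b+2) z) Filter.atTop (nhds 1) :=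
    hM 2 (by linarith)
  have hr1 : Filter.Tendsto
      (fun b : ℝ => kummerM (a+2) (b+2) z / kummerM (a+1) (b+1) z)
      Filter.atTop (nhds 1) := by
    have := hM2.div hM1 one_ne_zero
    simpa only [div_one, Pi.div_def] using this
  have hr2 : Filter.Tendsto
      (fun b : ℝ => kummerM (a+1) (b+1) z / kummerM a b z)
      Filter.atTop (nhds 1) := by
    have := hM1.div hM0 one_ne_zero
    simpa only [div_one, Pi.div_def] using this
  have hc1 : Filter.Tendsto (fun b : ℝ => ν * ((a + 1) / (b + 1))) Filter.atTop (nhds 0) := by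
    have h0 : Filter.Tendsto (fun b : ℝ => (a + 1) / (b + 1)) Filter.atTop (nhds 0) :=
      Filter.Tendsto.div_atTop tendsto_const_nhds (hshift 1)
    simpa using h0.const_mul ν
  have hc2 : Filter.Tendsto (fun b : ℝ => ν * (a / b)) Filter.atTop (nhds 0) := by
    have h0 : Filter.Tendsto (fun b : ℝ => a / b) Filter.atTop (nhds 0) :=
      Filter.Tendsto.div_atTop tendsto_const_nhds Filter.tendsto_id
    simpa using h0.const_mul ν
  have h1 : Filter.Tendsto
      (fun b : ℝ => ν * ((a + 1) / (b + 1)) * (kummerM (a+2) (b+2) z / kummerM (a+1) (b+1) z))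
      Filter.atTop (nhds 0) := by
    have := hc1.mul hr1; simpa using this
  have h2 : Filter.Tendsto
      (fun b : ℝ => ν * (a / b) * (kummerM (a+1) (b+1) z / kummerM a b z))
      Filter.atTop (nhds 0) := by
    have := hc2.mul hr2; simpa using this
  have := (h1.const_add 1).sub h2
  simpa using this
end
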